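/- arXiv:2111.13745 — 3 statements merged into one kernel-verified Lean document; each statement's English description precedes it below -/
import Mathlib

section
/- Let p be a prime and m ≥ 1 an integer. The number of points x ∈ [0,1] with g_p^m(x) = x and g_p^i(x) ≠ x for all 1 ≤ i < m (where g_p^i denotes the i-fold iterate) equals ∑_{d ∣ m} μ(m/d)·p^d, where μ is the Möbius function. -/
/-!
Writing `tent y` for the distance from `y` to `2ℤ`, we have `g_p x = tent (p x)`. Since `tent` is
even and `2`-periodic, `tent (p · tent y) = tent (p y)`, so `g_p ∘ g_q = g_{pq}` and
`g_p^n = g_{p^n}`. The map `g_q` has exactly one fixed point on each of its `q` laps, so the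
points of `[0,1]` whose minimal period divides `n` are `p^n` in number, and Möbius inversion of
`∑_{d ∣ n} #{minimal period d} = p^n` gives the formula.
-/

/-- The continuous piecewise linear map `g_p : [0,1] → [0,1]` that goes up and down
`p` times: on `[k/p, (k+1)/p]` it is `x ↦ p·x − k` for `k` even and
`x ↦ k + 1 − p·x` for `k` odd. -/
noncomputable def gp (p : ℕ) (x : ℝ) : ℝ :=
  if Even ⌊(p : ℝ) * x⌋ then (p : ℝ) * x - ⌊(p : ℝ) * x⌋
  else (⌊(p : ℝ) * x⌋ : ℝ) + 1 - (p : ℝ) * x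

open Function Set

/-- The distance from `y` to `2ℤ`, written so that `gp p x = tent (p * x)` holds by `rfl`. -/
noncomputable def tent (y : ℝ) : ℝ :=
  if Even ⌊y⌋ then y - ⌊y⌋ else ⌊y⌋ + 1 - y

lemma gp_eq_tent (p : ℕ) (x : ℝ) : gp p x = tent (p * x) := rfl

lemma tent_add_two_mul (y : ℝ) (n : ℤ) : tent (y + 2 * n) = tent y := by
  have hfloor : ⌊y + 2 * n⌋ = ⌊y⌋ + 2 * n := by
    rw [← Int.floor_add_intCast]; push_cast; rfl
  have hpar : Even (⌊y⌋ + 2 * n) ↔ Even ⌊y⌋ := by simp [Int.even_add]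
  simp only [tent, hfloor, hpar]
  split_ifs <;> push_cast <;> ring

lemma tent_neg (y : ℝ) : tent (-y) = tent y := by
  obtain hint | hlt := (Int.floor_le y).eq_or_lt
  · rw [← hint, ← Int.cast_neg]
    simp only [tent, Int.floor_intCast, even_neg]
    split_ifs <;> ring
  · have hfloor : ⌊-y⌋ = -⌊y⌋ - 1 := by
      rw [Int.floor_eq_iff]
      constructor <;> push_cast <;> linarith [Int.lt_floor_add_one y]
    have hpar : Even (-⌊y⌋ - 1) ↔ ¬Even ⌊y⌋ := by
      rw [Int.even_sub_one, even_neg]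
    simp only [tent, hfloor, hpar]
    split_ifs <;> push_cast <;> ring

lemma tent_of_mem_Icc {y : ℝ} (hy : y ∈ Icc 0 1) : tent y = y := by
  obtain hlt | rfl := hy.2.lt_or_eq
  · have : ⌊y⌋ = 0 := Int.floor_eq_zero_iff.mpr ⟨hy.1, hlt⟩
    simp [tent, this]
  · norm_num [tent]

lemma exists_tent_eq (y : ℝ) : ∃ n : ℤ, tent y = y - 2 * n ∨ tent y = 2 * n - y := by
  unfold tent
  split_ifs with h
  · obtain ⟨n, hn⟩ := h
    exact ⟨n, .inl (by rw [hn]; push_cast; ring)⟩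
  · obtain ⟨n, hn⟩ := Int.not_even_iff_odd.mp h
    exact ⟨n + 1, .inr (by rw [hn]; push_cast; ring)⟩

lemma tent_mul_tent (p : ℤ) (y : ℝ) : tent (p * tent y) = tent (p * y) := by
  obtain ⟨n, h | h⟩ := exists_tent_eq y <;> rw [h]
  · calc tent (p * (y - 2 * n)) = tent (p * y + 2 * (-(p * n) : ℤ)) := by push_cast; ring_nf
      _ = tent (p * y) := tent_add_two_mul _ _
  · calc tent (p * (2 * n - y)) = tent (-(p * y) + 2 * (p * n : ℤ)) := by push_cast; ring_nf
      _ = tent (p * y) := by rw [tent_add_two_mul, tent_neg]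

lemma gp_gp (p q : ℕ) (x : ℝ) : gp p (gp q x) = gp (p * q) x := by
  simp only [gp_eq_tent]
  rw [← Int.cast_natCast p, tent_mul_tent]
  push_cast; ring_nf

lemma iterate_gp (p : ℕ) {n : ℕ} (hn : 0 < n) : (gp p)^[n] = gp (p ^ n) := by
  induction n, hn using Nat.le_induction with
  | base => simp
  | succ n _ ih => funext x; rw [iterate_succ_apply', ih, gp_gp, pow_succ']

/-- The fixed point of `gp q` on its `k`-th lap `[k/q, (k+1)/q]`. -/
noncomputable def gpFixedPt (q k : ℕ) : ℝ :=
  if Even k then k / (q - 1) else (k + 1) / (q + 1)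

section FixedPoints

variable {q : ℕ}

lemma gpFixedPt_mem_Icc (hq : 2 ≤ q) {k : ℕ} (hk : k < q) : gpFixedPt q k ∈ Icc 0 1 := by
  have hkq : (k : ℝ) + 1 ≤ q := by exact_mod_cast hk
  have hq' : (2 : ℝ) ≤ q := by exact_mod_cast hq
  unfold gpFixedPt
  split_ifs <;> exact ⟨div_nonneg (by positivity) (by linarith),
    (div_le_one (by linarith)).mpr (by linarith)⟩

lemma isFixedPt_gp_gpFixedPt (hq : 2 ≤ q) {k : ℕ} (hk : k < q) :
    IsFixedPt (gp q) (gpFixedPt q k) := by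
  have hq' : (2 : ℝ) ≤ q := by exact_mod_cast hq
  have hmem := gpFixedPt_mem_Icc hq hk
  rw [IsFixedPt, gp_eq_tent]
  unfold gpFixedPt at hmem ⊢
  split_ifs at hmem ⊢ with hk2
  · obtain ⟨j, rfl⟩ := hk2
    have hmul : ((q : ℝ) - 1) * ((j + j : ℕ) / (q - 1)) = j + j := by
      rw [mul_div_cancel₀ _ (by linarith)]; push_cast; ring
    calc tent (q * ((j + j : ℕ) / (q - 1))) = tent ((j + j : ℕ) / (q - 1) + 2 * (j : ℤ)) := by
          congr 1; push_cast at hmul ⊢; linarith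
      _ = _ := by rw [tent_add_two_mul, tent_of_mem_Icc hmem]
  · obtain ⟨j, rfl⟩ := Nat.not_even_iff_odd.mp hk2
    calc tent (q * (((2 * j + 1 : ℕ) + 1) / (q + 1)))
          = tent (-(((2 * j + 1 : ℕ) + 1) / (q + 1)) + 2 * (j + 1 : ℤ)) := by
          congr 1; field_simp; push_cast; ring
      _ = _ := by rw [tent_add_two_mul, tent_neg, tent_of_mem_Icc hmem]

lemma exists_gpFixedPt_eq_of_sub_one_mul_eq (hq : 2 ≤ q) {x : ℝ} (hx : x ∈ Icc 0 1) {n : ℤ}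
    (hn : ((q : ℝ) - 1) * x = 2 * n) : ∃ k < q, gpFixedPt q k = x := by
  have hq' : (2 : ℝ) ≤ q := by exact_mod_cast hq
  lift n to ℕ using by
    have : (0 : ℝ) ≤ n := by nlinarith [hx.1]
    exact_mod_cast this
  push_cast at hn
  refine ⟨2 * n, ?_, ?_⟩
  · have : (2 * n : ℝ) < q := by
      nlinarith [mul_le_mul_of_nonneg_left hx.2 (by linarith : (0 : ℝ) ≤ q - 1)]
    exact_mod_cast this
  · rw [gpFixedPt, if_pos (even_two_mul n), div_eq_iff (by linarith)]
    push_cast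
    linarith

lemma exists_gpFixedPt_eq_of_add_one_mul_eq (hq : 2 ≤ q) {x : ℝ} (hx : x ∈ Icc 0 1) {n : ℤ}
    (hn : ((q : ℝ) + 1) * x = 2 * n) : ∃ k < q, gpFixedPt q k = x := by
  have hq' : (2 : ℝ) ≤ q := by exact_mod_cast hq
  lift n to ℕ using by
    have : (0 : ℝ) ≤ n := by nlinarith [hx.1]
    exact_mod_cast this
  rcases Nat.eq_zero_or_pos n with rfl | hn0
  · refine ⟨0, by omega, ?_⟩
    push_cast at hn
    simp only [gpFixedPt, Even.zero, if_true, Nat.cast_zero, zero_div]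
    nlinarith [hx.1]
  obtain ⟨m, rfl⟩ : ∃ m, n = m + 1 := ⟨n - 1, by omega⟩
  push_cast at hn
  rcases lt_or_ge (2 * m + 1) q with hlt | hge
  · refine ⟨2 * m + 1, hlt, ?_⟩
    rw [gpFixedPt, if_neg (by simp), div_eq_iff (by linarith)]
    push_cast
    linarith
  -- Here `x = 1` and `q` is odd, so `x` is the fixed point of the (increasing) last lap.
  have hqm : q = 2 * m + 1 := by
    have : ((2 * m + 2 : ℕ) : ℝ) ≤ (q + 1 : ℕ) := by
      push_cast; nlinarith [mul_le_mul_of_nonneg_left hx.2 (by linarith : (0 : ℝ) ≤ q + 1)]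
    have := Nat.cast_le.mp this
    omega
  subst hqm
  have hx1 : x = 1 := by
    apply mul_left_cancel₀ (show ((2 * m + 1 : ℕ) : ℝ) + 1 ≠ 0 by positivity)
    push_cast at hn ⊢
    linarith
  refine ⟨2 * m, by omega, ?_⟩
  rw [gpFixedPt, if_pos (even_two_mul m), hx1, 
    div_eq_one_iff_eq (by push_cast at hq' ⊢; linarith)]
  push_cast
  ring

lemma exists_gpFixedPt_eq (hq : 2 ≤ q) {x : ℝ} (hx : x ∈ Icc 0 1)
    (hfix : IsFixedPt (gp q) x) : ∃ k < q, gpFixedPt q k = x := by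
  rw [IsFixedPt, gp_eq_tent] at hfix
  obtain ⟨n, h | h⟩ := exists_tent_eq (q * x)
  · exact exists_gpFixedPt_eq_of_sub_one_mul_eq hq hx (n := n) (by linarith)
  · exact exists_gpFixedPt_eq_of_add_one_mul_eq hq hx (n := n) (by linarith)

lemma gpFixedPt_strictMonoOn (hq : 2 ≤ q) : StrictMonoOn (gpFixedPt q) (Iio q) := by
  intro a ha b hb hab
  have hq' : (2 : ℝ) ≤ q := by exact_mod_cast hq
  have habR : (a : ℝ) + 1 ≤ b := by exact_mod_cast hab
  have hbR : (b : ℝ) + 1 ≤ q := by exact_mod_cast (show b < q from hb)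
  have ha0 : (0 : ℝ) ≤ a := a.cast_nonneg
  unfold gpFixedPt
  split_ifs <;> rw [div_lt_div_iff₀ (by linarith) (by linarith)] <;> nlinarith

lemma setOf_isFixedPt_gp (hq : 2 ≤ q) :
    {x ∈ Icc 0 1 | IsFixedPt (gp q) x} = gpFixedPt q '' Iio q := by
  ext x
  constructor
  · rintro ⟨hx, hfix⟩
    obtain ⟨k, hk, rfl⟩ := exists_gpFixedPt_eq hq hx hfix
    exact ⟨k, hk, rfl⟩
  · rintro ⟨k, hk, rfl⟩
    exact ⟨gpFixedPt_mem_Icc hq hk, isFixedPt_gp_gpFixedPt hq hk⟩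

lemma ncard_setOf_isFixedPt_gp (hq : 2 ≤ q) : {x ∈ Icc 0 1 | IsFixedPt (gp q) x}.ncard = q := by
  rw [setOf_isFixedPt_gp hq, (gpFixedPt_strictMonoOn hq).injOn.ncard_image,
    ncard_Iio_nat]

end FixedPoints

section MinimalPeriod

variable {α : Type*} {f : α → α}

lemma minimalPeriod_eq_iff_of_pos {x : α} {m : ℕ} (hm : 0 < m) :
    minimalPeriod f x = m ↔
      IsPeriodicPt f m x ∧ ∀ i, 0 < i → i < m → ¬IsPeriodicPt f i x := by
  constructor
  · rintro rfl
    exact ⟨isPeriodicPt_minimalPeriod f x, fun i hi hlt =>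
      not_isPeriodicPt_of_pos_of_lt_minimalPeriod hi.ne' hlt⟩
  · rintro ⟨hper, hmin⟩
    refine le_antisymm (hper.minimalPeriod_le hm) (not_lt.mp fun hlt => ?_)
    exact hmin _ (hper.minimalPeriod_pos hm) hlt (isPeriodicPt_minimalPeriod f x)

lemma sum_ncard_minimalPeriod_eq {s : Set α} {n : ℕ} (hn : 0 < n)
    (hfin : {x ∈ s | IsPeriodicPt f n x}.Finite) :
    ∑ d ∈ n.divisors, {x ∈ s | minimalPeriod f x = d}.ncard =
      {x ∈ s | IsPeriodicPt f n x}.ncard := by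
  classical
  have hmaps : ∀ x ∈ hfin.toFinset, minimalPeriod f x ∈ n.divisors := fun x hx =>
    Nat.mem_divisors.mpr ⟨((hfin.mem_toFinset).mp hx).2.minimalPeriod_dvd, hn.ne'⟩
  rw [ncard_eq_toFinset_card _ hfin, Finset.card_eq_sum_card_fiberwise hmaps]
  refine Finset.sum_congr rfl fun d hd => ?_
  rw [← ncard_coe_finset]
  congr 1
  ext x
  simp only [Finset.coe_filter, hfin.mem_toFinset, mem_ofPred_eq, and_assoc]
  refine and_congr_right fun _ => ⟨fun h => ⟨?_, h⟩, And.right⟩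
  rw [isPeriodicPt_iff_minimalPeriod_dvd, h]
  exact Nat.dvd_of_mem_divisors hd

end MinimalPeriod

lemma ncard_setOf_isPeriodicPt_gp {p n : ℕ} (hp : 2 ≤ p) (hn : 0 < n) :
    {x ∈ Icc 0 1 | IsPeriodicPt (gp p) n x}.ncard = p ^ n := by
  simp only [IsPeriodicPt, iterate_gp p hn]
  exact ncard_setOf_isFixedPt_gp (hp.trans (Nat.le_self_pow hn.ne' p))

/-- The number of points of `[0,1]` that are periodic of order `m` for `g_p` equals
`∑_{d ∣ m} μ(m/d)·p^d`. -/
theorem card_periodic_eq_moebius_sum (p m : ℕ) (hp : p.Prime) (hm : 1 ≤ m) :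
    ({x ∈ Set.Icc (0 : ℝ) 1 |
        (gp p)^[m] x = x ∧ ∀ i, 1 ≤ i → i < m → (gp p)^[i] x ≠ x}.ncard : ℤ)
      = ∑ d ∈ m.divisors, ArithmeticFunction.moebius (m / d) * (p : ℤ) ^ d := by
  have hcount : ∀ n > 0, ∑ d ∈ n.divisors,
      ({x ∈ Icc (0 : ℝ) 1 | minimalPeriod (gp p) x = d}.ncard : ℤ) = (p : ℤ) ^ n := by
    intro n hn
    have hper := ncard_setOf_isPeriodicPt_gp hp.two_le hn
    have hfin := finite_of_ncard_pos (hper ▸ pow_pos hp.pos n)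
    exact_mod_cast (sum_ncard_minimalPeriod_eq hn hfin).trans hper
  have hinv := ArithmeticFunction.sum_eq_iff_sum_smul_moebius_eq.mp hcount m hm
  rw [Nat.sum_divisorsAntidiagonal'
    (f := fun a b => ArithmeticFunction.moebius a • (p : ℤ) ^ b)] at hinv
  simp only [smul_eq_mul] at hinv
  rw [hinv]
  congr 2
  ext x
  exact and_congr_right fun _ => (minimalPeriod_eq_iff_of_pos hm).symm
end

section
/- Let p be a prime and n ≥ 1 an integer. There exists a bijection B from the set FP(g_p^n) = {x ∈ [0,1] : g_p^n(x) = x} (where g_p^n denotes the n-fold iterate) to the finite field F_{p^n} with p^n elements such that B(x)^p = B(g_p(x)) for every x ∈ FP(g_p^n). (Note that g_p maps FP(g_p^n) into itself.) -/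
open Function Set Real Polynomial

/-- The `2`-periodic even function that is the identity on `[0, 1]`. -/
noncomputable def triangleWave (t : ℝ) : ℝ :=
  if Even ⌊t⌋ then t - ⌊t⌋ else ⌊t⌋ + 1 - t

theorem gp_eq_triangleWave (p : ℕ) (x : ℝ) : gp p x = triangleWave (p * x) := rfl

theorem triangleWave_mem_Icc (t : ℝ) : triangleWave t ∈ Icc (0 : ℝ) 1 := by
  have := Int.floor_le t
  have := Int.lt_floor_add_one t
  unfold triangleWave
  split_ifs <;> constructor <;> linarith

theorem cos_pi_mul_triangleWave (t : ℝ) : cos (π * triangleWave t) = cos (π * t) := by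
  unfold triangleWave
  split_ifs with h
  · obtain ⟨k, hk⟩ := h
    rw [hk, show π * (t - ((k + k : ℤ) : ℝ)) = π * t - k * (2 * π) by push_cast; ring,
      cos_sub_int_mul_two_pi]
  · obtain ⟨k, hk⟩ := Int.not_even_iff_odd.mp h
    rw [hk, show π * (((2 * k + 1 : ℤ) : ℝ) + 1 - t) = (k + 1 : ℤ) * (2 * π) - π * t by
      push_cast; ring, cos_int_mul_two_pi_sub]

theorem eq_of_cos_pi_mul_eq {x y : ℝ} (hx : x ∈ Icc (0 : ℝ) 1) (hy : y ∈ Icc (0 : ℝ) 1)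
    (h : cos (π * x) = cos (π * y)) : x = y := by
  have mem {u : ℝ} (hu : u ∈ Icc (0 : ℝ) 1) : π * u ∈ Icc 0 π :=
    ⟨by nlinarith [pi_pos, hu.1], by nlinarith [pi_pos, hu.2]⟩
  exact mul_left_cancel₀ pi_ne_zero (injOn_cos (mem hx) (mem hy) h)

theorem triangleWave_of_mem_Icc {x : ℝ} (hx : x ∈ Icc (0 : ℝ) 1) : triangleWave x = x :=
  eq_of_cos_pi_mul_eq (triangleWave_mem_Icc x) hx (cos_pi_mul_triangleWave x)

theorem triangleWave_eq_iff_cos_eq {s t : ℝ} :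
    triangleWave s = triangleWave t ↔ cos (π * s) = cos (π * t) := by
  rw [← cos_pi_mul_triangleWave s, ← cos_pi_mul_triangleWave t]
  exact ⟨fun h => by rw [h], eq_of_cos_pi_mul_eq (triangleWave_mem_Icc s) (triangleWave_mem_Icc t)⟩

theorem triangleWave_eq_iff {s t : ℝ} :
    triangleWave s = triangleWave t ↔ ∃ k : ℤ, t = 2 * k + s ∨ t = 2 * k - s := by
  rw [triangleWave_eq_iff_cos_eq, cos_eq_cos_iff]
  refine exists_congr fun k => or_congr ?_ ?_ <;>
  · constructor <;> intro h
    · exact mul_left_cancel₀ pi_ne_zero (by linear_combination h)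
    · linear_combination π * h

theorem triangleWave_natCast_mul_triangleWave (c : ℕ) (t : ℝ) :
    triangleWave (c * triangleWave t) = triangleWave (c * t) := by
  have chebyshev (θ : ℝ) : cos (c * θ) = (Polynomial.Chebyshev.T ℝ c).eval (cos θ) := by
    simp
  rw [triangleWave_eq_iff_cos_eq, mul_left_comm, chebyshev, cos_pi_mul_triangleWave, ← chebyshev,
    mul_left_comm]

theorem gp_iterate_triangleWave (p k : ℕ) (t : ℝ) :
    (gp p)^[k] (triangleWave t) = triangleWave (p ^ k * t) := by
  have : Semiconj triangleWave (fun t => (p : ℝ) * t) (gp p) := fun t => by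
    rw [gp_eq_triangleWave, triangleWave_natCast_mul_triangleWave]
  rw [← this.iterate_right k t, mul_left_iterate_apply]

noncomputable def triangleNode (N : ℕ) (m : ℤ) : ℝ := triangleWave (2 * m / N)

theorem triangleNode_eq_iff {N : ℕ} (hN : N ≠ 0) {i j : ℤ} :
    triangleNode N i = triangleNode N j ↔ (N : ℤ) ∣ i - j ∨ (N : ℤ) ∣ i + j := by
  have hN' : (N : ℝ) ≠ 0 := Nat.cast_ne_zero.mpr hN
  rw [triangleNode, triangleNode, triangleWave_eq_iff]
  constructor
  · rintro ⟨k, h | h⟩ <;> field_simp at h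
    · exact Or.inl ⟨-k, by rify; linear_combination -h⟩
    · exact Or.inr ⟨k, by rify; linear_combination h⟩
  · rintro (⟨k, hk⟩ | ⟨k, hk⟩) <;> rify at hk
    · exact ⟨-k, Or.inl (by field_simp; push_cast; linear_combination -hk)⟩
    · exact ⟨k, Or.inr (by field_simp; linear_combination hk)⟩

theorem gp_iterate_triangleNode (p k N : ℕ) (m : ℤ) :
    (gp p)^[k] (triangleNode N m) = triangleNode N ((p : ℤ) ^ k * m) := by
  rw [triangleNode, gp_iterate_triangleWave, triangleNode]
  push_cast
  ring_nf

theorem exists_triangleNode_eq {q : ℕ} (hq : 1 < q) {x : ℝ} (hx : x ∈ Icc (0 : ℝ) 1)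
    (h : triangleWave (q * x) = x) : ∃ m, triangleNode (q ^ 2 - 1) m = x := by
  have hq1 : (q : ℝ) - 1 ≠ 0 := sub_ne_zero.mpr (by exact_mod_cast hq.ne')
  have hq1' : (q : ℝ) + 1 ≠ 0 := by positivity
  have hN : (((q ^ 2 - 1 : ℕ) : ℝ)) = (q - 1) * (q + 1) := by
    rw [Nat.cast_sub (Nat.one_le_pow _ _ (by omega))]
    push_cast
    ring
  obtain ⟨k, hk | hk⟩ := triangleWave_eq_iff.mp (h.trans (triangleWave_of_mem_Icc hx).symm)
  · refine ⟨-k * (q + 1), ?_⟩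
    rw [triangleNode, hN, ← triangleWave_of_mem_Icc hx]
    congr 1
    field_simp
    push_cast
    linear_combination ((q : ℝ) + 1) * hk
  · refine ⟨k * (q - 1), ?_⟩
    rw [triangleNode, hN, ← triangleWave_of_mem_Icc hx]
    congr 1
    field_simp
    push_cast
    linear_combination (1 - (q : ℝ)) * hk

theorem setOf_gp_iterate_eq_self_eq_image {p n : ℕ} (hq : 1 < p ^ n) :
    {x ∈ Icc (0 : ℝ) 1 | (gp p)^[n] x = x} = triangleNode ((p ^ n) ^ 2 - 1) ''
      {m | triangleNode ((p ^ n) ^ 2 - 1) ((p : ℤ) ^ n * m) = triangleNode ((p ^ n) ^ 2 - 1) m} := by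
  ext x
  constructor
  · rintro ⟨hx, hfix⟩
    have h := gp_iterate_triangleWave p n x
    rw [triangleWave_of_mem_Icc hx, hfix] at h
    obtain ⟨m, rfl⟩ := exists_triangleNode_eq hq hx (by push_cast; exact h.symm)
    exact ⟨m, (gp_iterate_triangleNode p n _ m).symm.trans hfix, rfl⟩
  · rintro ⟨m, hm, rfl⟩
    exact ⟨triangleWave_mem_Icc _, (gp_iterate_triangleNode p n _ m).trans hm⟩

section TwoCos

variable {K : Type*} [Field K]

/-- The characteristic-free analogue of `2 * cos (2 * π * m / N)` for a primitive `N`-th root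
of unity `ζ`. -/
def twoCos (ζ : K) (m : ℤ) : K := ζ ^ m + ζ ^ (-m)

theorem add_inv_eq_add_inv_iff {z w : K} (hz : z ≠ 0) (hw : w ≠ 0) :
    z + z⁻¹ = w + w⁻¹ ↔ z = w ∨ z * w = 1 := by
  constructor
  · intro h
    have : (z - w) * (z * w - 1) = 0 := by
      field_simp at h
      linear_combination h
    rcases mul_eq_zero.mp this with h | h
    · exact Or.inl (sub_eq_zero.mp h)
    · exact Or.inr (sub_eq_zero.mp h)
  · rintro (rfl | h)
    · rfl
    · rw [eq_inv_of_mul_eq_one_right h, inv_inv, add_comm]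

theorem twoCos_eq_twoCos_iff {ζ : K} {N : ℕ} (hζ : IsPrimitiveRoot ζ N) (hN : N ≠ 0) {i j : ℤ} :
    twoCos ζ i = twoCos ζ j ↔ (N : ℤ) ∣ i - j ∨ (N : ℤ) ∣ i + j := by
  have hζ0 := hζ.ne_zero hN
  simp only [twoCos, zpow_neg]
  rw [add_inv_eq_add_inv_iff (zpow_ne_zero i hζ0) (zpow_ne_zero j hζ0), ← hζ.zpow_eq_one_iff_dvd,
    ← hζ.zpow_eq_one_iff_dvd, zpow_sub₀ hζ0, zpow_add₀ hζ0, div_eq_one_iff_eq (zpow_ne_zero j hζ0)]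

theorem twoCos_pow_expChar_pow (p : ℕ) [ExpChar K p] (ζ : K) (m : ℤ) (k : ℕ) :
    twoCos ζ m ^ p ^ k = twoCos ζ ((p : ℤ) ^ k * m) := by
  rw [twoCos, twoCos, add_pow_expChar_pow, ← zpow_natCast, ← zpow_natCast, ← zpow_mul, ← zpow_mul]
  push_cast
  ring_nf

theorem exists_ne_zero_add_inv_eq [IsAlgClosed K] (a : K) : ∃ z ≠ 0, z + z⁻¹ = a := by
  obtain ⟨z, hz⟩ := IsAlgClosed.exists_root (X ^ 2 - C a * X + 1 : K[X]) (by
    rw [show (X ^ 2 - C a * X + 1 : K[X]).degree = 2 by compute_degree!]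
    norm_num)
  simp only [IsRoot, eval_add, eval_sub, eval_mul, eval_pow, eval_X, eval_C, eval_one] at hz
  have hz0 : z ≠ 0 := by rintro rfl; simp at hz
  refine ⟨z, hz0, ?_⟩
  field_simp
  linear_combination hz

theorem pow_sq_eq_self_of_add_inv_pow_eq {p : ℕ} [ExpChar K p] {n : ℕ} {z : K} (hz : z ≠ 0)
    (h : (z + z⁻¹) ^ p ^ n = z + z⁻¹) : z ^ (p ^ n) ^ 2 = z := by
  rw [add_pow_expChar_pow, inv_pow, add_inv_eq_add_inv_iff (pow_ne_zero _ hz) hz] at h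
  rw [sq, pow_mul]
  rcases h with h | h
  · rw [h, h]
  · have h := eq_inv_of_mul_eq_one_left h
    rw [h, inv_pow, h, inv_inv]

theorem exists_twoCos_eq [IsAlgClosed K] {p : ℕ} [ExpChar K p] {n : ℕ} {ζ : K}
    (hζ : IsPrimitiveRoot ζ ((p ^ n) ^ 2 - 1)) (hq : 1 < p ^ n) {a : K} (ha : a ^ p ^ n = a) :
    ∃ m : ℤ, twoCos ζ m = a := by
  obtain ⟨z, hz, rfl⟩ := exists_ne_zero_add_inv_eq a
  have : NeZero ((p ^ n) ^ 2 - 1) := ⟨by have := Nat.one_lt_pow two_ne_zero hq; omega⟩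
  obtain ⟨i, -, hi⟩ := hζ.eq_pow_of_pow_eq_one (ξ := z) (by
    rw [pow_sub₀ _ hz (Nat.one_le_pow _ _ (by omega)), pow_sq_eq_self_of_add_inv_pow_eq hz ha,
      pow_one, mul_inv_cancel₀ hz])
  exact ⟨i, by rw [twoCos, zpow_neg, zpow_natCast, hi]⟩

theorem setOf_pow_eq_self_eq_image [IsAlgClosed K] {p : ℕ} [ExpChar K p] {n : ℕ} {ζ : K}
    (hζ : IsPrimitiveRoot ζ ((p ^ n) ^ 2 - 1)) (hq : 1 < p ^ n) :
    {a : K | a ^ p ^ n = a} = twoCos ζ '' {m | twoCos ζ ((p : ℤ) ^ n * m) = twoCos ζ m} := by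
  ext a
  constructor
  · intro ha
    obtain ⟨m, rfl⟩ := exists_twoCos_eq hζ hq ha
    exact ⟨m, (twoCos_pow_expChar_pow p ζ m n).symm.trans ha, rfl⟩
  · rintro ⟨m, hm, rfl⟩
    exact (twoCos_pow_expChar_pow p ζ m n).trans hm

end TwoCos

theorem bijOn_extend_image {ι α β : Type*} {f : ι → α} {g : ι → β}
    (hfg : ∀ i j, f i = f j ↔ g i = g j) (e' : α → β) (s : Set ι) :
    BijOn (extend f g e') (f '' s) (g '' s) := by
  have hext (i : ι) : extend f g e' (f i) = g i :=
    FactorsThrough.extend_apply (fun i j h => (hfg i j).mp h) e' i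
  refine ⟨?_, ?_, ?_⟩
  · rintro _ ⟨i, hi, rfl⟩
    exact ⟨i, hi, (hext i).symm⟩
  · rintro _ ⟨i, -, rfl⟩ _ ⟨j, -, rfl⟩ h
    rw [hext, hext] at h
    exact (hfg i j).mpr h
  · rintro _ ⟨i, hi, rfl⟩
    exact ⟨f i, ⟨i, hi, rfl⟩, hext i⟩

theorem exists_bijOn_setOf_pow_eq_self {p n : ℕ} [hp : Fact p.Prime] (hq : 1 < p ^ n)
    (K : Type*) [Field K] [IsAlgClosed K] [CharP K p] :
    ∃ Φ : ℝ → K, BijOn Φ {x ∈ Icc (0 : ℝ) 1 | (gp p)^[n] x = x} {a | a ^ p ^ n = a} ∧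
      ∀ x ∈ {x ∈ Icc (0 : ℝ) 1 | (gp p)^[n] x = x}, Φ (gp p x) = Φ x ^ p := by
  set N := (p ^ n) ^ 2 - 1 with hN_def
  have hN : N ≠ 0 := by have := Nat.one_lt_pow two_ne_zero hq; omega
  have : NeZero (N : K) := ⟨fun h => by
    have hn : n ≠ 0 := by rintro rfl; simp at hq
    rw [CharP.cast_eq_zero_iff K p] at h
    have := Nat.dvd_sub (dvd_pow (dvd_pow_self p hn) two_ne_zero) h
    rw [Nat.sub_sub_self (by omega)] at this
    exact hp.out.not_dvd_one this⟩
  obtain ⟨ζ, hζ⟩ := HasEnoughRootsOfUnity.exists_primitiveRoot K N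
  have hfib (i j : ℤ) : triangleNode N i = triangleNode N j ↔ twoCos ζ i = twoCos ζ j := by
    rw [triangleNode_eq_iff hN, twoCos_eq_twoCos_iff hζ hN]
  refine ⟨extend (triangleNode N) (twoCos ζ) 0, ?_, ?_⟩
  · rw [setOf_gp_iterate_eq_self_eq_image hq, setOf_pow_eq_self_eq_image hζ hq]
    simp_rw [← hN_def, hfib]
    exact bijOn_extend_image hfib _ _
  · rw [setOf_gp_iterate_eq_self_eq_image hq]
    rintro _ ⟨m, -, rfl⟩
    have hfac : (twoCos ζ).FactorsThrough (triangleNode N) := fun i j h => (hfib i j).mp h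
    have := gp_iterate_triangleNode p 1 N m
    rw [iterate_one, pow_one] at this
    rw [this, hfac.extend_apply, hfac.extend_apply]
    simpa using (twoCos_pow_expChar_pow p ζ m 1).symm

theorem bijOn_algebraMap_galoisField (p : ℕ) [hp : Fact p.Prime] {n : ℕ} (hn : n ≠ 0)
    (L : Type*) [Field L] [Algebra (ZMod p) L] [Algebra (GaloisField p n) L]
    [IsScalarTower (ZMod p) (GaloisField p n) L] :
    BijOn (algebraMap (GaloisField p n) L) univ {a : L | a ^ p ^ n = a} := by
  have hf : (X ^ p ^ n - X : (ZMod p)[X]) ≠ 0 :=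
    FiniteField.X_pow_card_pow_sub_X_ne_zero (ZMod p) hn hp.out.one_lt
  have himage := (FiniteField.splits_X_pow_nat_card_sub_X p (K := GaloisField p n)
    ).image_rootSet_algebraMap (B := L)
  rw [GaloisField.card p n hn] at himage
  have hGF : (X ^ p ^ n - X : (ZMod p)[X]).rootSet (GaloisField p n) = univ := by
    have := Fintype.ofFinite (GaloisField p n)
    have hcard (b : GaloisField p n) : b ^ p ^ n = b := by
      rw [← GaloisField.card p n hn, Nat.card_eq_fintype_card, FiniteField.pow_card]
    ext b
    simp [mem_rootSet, hf, hcard]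
  have hL : (X ^ p ^ n - X : (ZMod p)[X]).rootSet L = {a : L | a ^ p ^ n = a} := by
    ext a
    simp [mem_rootSet, hf, sub_eq_zero]
  rw [← hL, ← himage, hGF]
  exact (algebraMap (GaloisField p n) L).injective.injOn.bijOn_image

/-- There is a bijection `B` from the fixed points of `g_p^n` to `F_{p^n}` such that
`B(x)^p = B(g_p(x))` for every fixed point `x` of `g_p^n`. -/
theorem exists_bijection_fixedPoints_galoisField (p n : ℕ) [Fact p.Prime] (hn : 1 ≤ n) :
    ∃ B : ℝ → GaloisField p n,
      Set.BijOn B {x ∈ Set.Icc (0 : ℝ) 1 | (gp p)^[n] x = x} Set.univ ∧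
      ∀ x ∈ {x ∈ Set.Icc (0 : ℝ) 1 | (gp p)^[n] x = x}, B x ^ p = B (gp p x) := by
  let K := AlgebraicClosure (GaloisField p n)
  have hq : 1 < p ^ n := one_lt_pow₀ (Fact.out : p.Prime).one_lt (by omega)
  obtain ⟨Φ, hΦ, hΦ_gp⟩ := exists_bijOn_setOf_pow_eq_self hq K
  have he := bijOn_algebraMap_galoisField p (by omega : n ≠ 0) K
  have hinv := he.invOn_invFunOn
  refine ⟨invFunOn (algebraMap _ K) univ ∘ Φ, (he.symm hinv.symm).comp hΦ, fun x hx => ?_⟩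
  obtain ⟨b, -, hb⟩ := he.surjOn (hΦ.mapsTo hx)
  simp only [comp_apply, hΦ_gp x hx, ← hb, ← map_pow, hinv.1 (mem_univ _)]
end

section
/- Let p ≥ 2 and n ≥ 1 be integers. The n-fold iterate g_p^n has exactly p^n fixed points in [0,1], and if x_0 < x_1 < ... < x_{p^n−1} denote these fixed points in increasing order, then for 0 ≤ k < p^n one has x_k = k/(p^n − 1) if k is even, and x_k = (k+1)/(p^n + 1) if k is odd. -/
lemma gp_eq (p : ℕ) (x : ℝ) :
    gp p x = if Even ⌊(p:ℝ)*x⌋ then Int.fract ((p:ℝ)*x) else 1 - Int.fract ((p:ℝ)*x) := by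
  unfold gp Int.fract
  split <;> ring

lemma gp_comp (p q : ℕ) (x : ℝ) : gp p (gp q x) = gp (p*q) x := by
  set k : ℤ := ⌊(q:ℝ)*x⌋ with hk
  set t : ℝ := Int.fract ((q:ℝ)*x) with htdef
  have key : ((p*q : ℕ):ℝ) * x = ((p * k : ℤ):ℝ) + (p:ℝ) * t := by
    have h := Int.floor_add_fract ((q:ℝ)*x)
    push_cast
    nlinarith [h]
  have hflK : ⌊((p*q : ℕ):ℝ) * x⌋ = p * k + ⌊(p:ℝ)*t⌋ := by
    rw [key, Int.floor_intCast_add]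
  have hfrK : Int.fract (((p*q : ℕ):ℝ) * x) = Int.fract ((p:ℝ)*t) := by
    rw [key, Int.fract_intCast_add]
  set j : ℤ := ⌊(p:ℝ)*t⌋ with hj
  rw [gp_eq q]
  by_cases hke : Even k
  · rw [if_pos hke]
    rw [gp_eq, gp_eq, hflK, hfrK]
    have hpar : Even ((p:ℤ)*k + j) ↔ Even j := by
      rw [Int.even_add]
      simp [hke.mul_left (p:ℤ)]
    by_cases hje : Even j
    · rw [if_pos hje, if_pos (hpar.mpr hje)]
    · rw [if_neg hje, if_neg (fun h => hje (hpar.mp h))]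
  · rw [if_neg hke]
    rw [gp_eq, gp_eq, hflK, hfrK]
    have h1t : (p:ℝ) * (1 - t) = ((p:ℤ):ℝ) + (-((p:ℝ)*t)) := by push_cast; ring
    rw [h1t, Int.floor_intCast_add, Int.fract_intCast_add]
    by_cases hs : Int.fract ((p:ℝ)*t) = 0
    · have hz : (p:ℝ)*t = ((j:ℤ):ℝ) := by
        have h := Int.floor_add_fract ((p:ℝ)*t)
        rw [hs] at h; linarith
      have hfn : Int.fract (-((p:ℝ)*t)) = 0 := Int.fract_neg_eq_zero.mpr hs
      have hfln : ⌊-((p:ℝ)*t)⌋ = -j := by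
        rw [hz, ← Int.cast_neg, Int.floor_intCast]
      rw [hfn, hfln, hs]
      have hpar : Even ((p:ℤ) + -j) ↔ Even ((p:ℤ)*k + j) := by
        simp only [Int.even_add, Int.even_mul, even_neg]
        tauto
      by_cases he : Even ((p:ℤ)*k + j)
      · rw [if_pos he, if_pos (hpar.mpr he)]
      · rw [if_neg he, if_neg (fun h => he (hpar.mp h))]
    · have hfn : Int.fract (-((p:ℝ)*t)) = 1 - Int.fract ((p:ℝ)*t) := Int.fract_neg hs
      have hfl0 : ((j:ℤ):ℝ) ≤ (p:ℝ)*t := Int.floor_le _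
      have hfl1 : (p:ℝ)*t < ((j:ℤ):ℝ) + 1 := Int.lt_floor_add_one _
      have hne : ((j:ℤ):ℝ) < (p:ℝ)*t := by
        rcases lt_or_eq_of_le hfl0 with h | h
        · exact h
        · exfalso; apply hs; rw [Int.fract, ← hj, ← h]; ring
      have hfln : ⌊-((p:ℝ)*t)⌋ = -j - 1 := by
        rw [Int.floor_eq_iff]
        constructor
        · push_cast; linarith
        · push_cast; linarith
      rw [hfn, hfln]
      have hpar : Even ((p:ℤ) + (-j - 1)) ↔ ¬ Even ((p:ℤ)*k + j) := by
        simp only [Int.even_add, Int.even_mul, Int.even_sub, even_neg]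
        have : ¬ Even (1:ℤ) := by decide
        tauto
      by_cases he : Even ((p:ℤ)*k + j)
      · rw [if_pos he, if_neg (fun h => (hpar.mp h) he)]; ring
      · rw [if_neg he, if_pos (hpar.mpr he)]

lemma gp_iterate (p n : ℕ) (hn : 1 ≤ n) (x : ℝ) : (gp p)^[n] x = gp (p^n) x := by
  induction n with
  | zero => omega
  | succ m ih =>
    rcases Nat.eq_or_lt_of_le hn with h | h
    · simp [← h]
    · have hm : 1 ≤ m := by omega
      rw [Function.iterate_succ', Function.comp_apply, ih hm, gp_comp, pow_succ, Nat.mul_comm]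

lemma gp_of_floor (q : ℕ) (y : ℝ) (m : ℤ) (h : ⌊(q:ℝ)*y⌋ = m) :
    gp q y = if Even m then (q:ℝ)*y - (m:ℝ) else (m:ℝ) + 1 - (q:ℝ)*y := by
  unfold gp; rw [h]

noncomputable def xf (q : ℕ) (k : ℕ) : ℝ :=
  if Even k then (k:ℝ)/((q:ℝ)-1) else ((k:ℝ)+1)/((q:ℝ)+1)

lemma xf_fixed (q : ℕ) (hq : 2 ≤ q) (k : ℕ) (hk : k < q) :
    xf q k ∈ Set.Icc (0:ℝ) 1 ∧ gp q (xf q k) = xf q k := by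
  have hQ2 : (2:ℝ) ≤ (q:ℝ) := by exact_mod_cast hq
  have hkQ : (k:ℝ) + 1 ≤ (q:ℝ) := by exact_mod_cast hk
  have hne : (q:ℝ) - 1 ≠ 0 := by linarith
  by_cases hke : Even k
  · rw [xf, if_pos hke]
    set y := (k:ℝ)/((q:ℝ)-1) with hy
    have hy0 : 0 ≤ y := div_nonneg (by positivity) (by linarith)
    have hy1 : y ≤ 1 := by
      rw [div_le_one (by linarith)]; linarith
    have hQy : (q:ℝ) * y = (k:ℝ) + y := by
      rw [hy]; field_simp; ring
    refine ⟨⟨hy0, hy1⟩, ?_⟩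
    by_cases hlast : k + 1 < q
    · have hklt : (k:ℝ) + 2 ≤ (q:ℝ) := by exact_mod_cast hlast
      have hylt : y < 1 := by
        rw [div_lt_one (by linarith)]; linarith
      have hfl : ⌊(q:ℝ)*y⌋ = (k:ℤ) := by
        rw [Int.floor_eq_iff]
        constructor
        · push_cast; linarith
        · push_cast; linarith
      rw [gp_of_floor q y (k:ℤ) hfl, if_pos (by exact_mod_cast hke : Even (k:ℤ))]
      push_cast; linarith
    · have hkq : k + 1 = q := by omega
      have hkr : (k:ℝ) = (q:ℝ) - 1 := by
        have : ((k:ℕ):ℝ) + 1 = (q:ℝ) := by exact_mod_cast hkq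
        linarith
      have hy1' : y = 1 := by rw [hy, hkr]; exact div_self hne
      have hfl : ⌊(q:ℝ)*y⌋ = (q:ℤ) := by
        rw [hy1', mul_one]; exact_mod_cast Int.floor_natCast q
      have hqodd : ¬ Even (q:ℤ) := by
        have hn : ¬ Even q := by
          intro h; rw [← hkq] at h
          exact (Nat.even_add_one.mp h) hke
        exact_mod_cast hn
      rw [gp_of_floor q y (q:ℤ) hfl, if_neg hqodd, hy1']
      push_cast; ring
  · rw [xf, if_neg hke]
    set y := ((k:ℝ)+1)/((q:ℝ)+1) with hy
    have hy0 : 0 < y := by positivity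
    have hy1 : y < 1 := by
      rw [div_lt_one (by linarith)]; linarith
    have hQy : (q:ℝ) * y = (k:ℝ) + 1 - y := by
      rw [hy]; field_simp; ring
    refine ⟨⟨hy0.le, hy1.le⟩, ?_⟩
    have hfl : ⌊(q:ℝ)*y⌋ = (k:ℤ) := by
      rw [Int.floor_eq_iff]
      constructor
      · push_cast; linarith
      · push_cast; linarith
    rw [gp_of_floor q y (k:ℤ) hfl, if_neg (by exact_mod_cast hke : ¬ Even (k:ℤ))]
    push_cast; linarith

lemma xf_surj (q : ℕ) (hq : 2 ≤ q) (y : ℝ) (hy : y ∈ Set.Icc (0:ℝ) 1)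
    (hfix : gp q y = y) : ∃ k < q, xf q k = y := by
  have hQ2 : (2:ℝ) ≤ (q:ℝ) := by exact_mod_cast hq
  obtain ⟨hy0, hy1⟩ := hy
  rcases lt_or_eq_of_le hy1 with hylt | hyeq
  · set m : ℤ := ⌊(q:ℝ)*y⌋ with hm
    have hm0 : 0 ≤ m := Int.floor_nonneg.mpr (by positivity)
    have hfl : ((m:ℤ):ℝ) ≤ (q:ℝ)*y := Int.floor_le _
    have hfl1 : (q:ℝ)*y < ((m:ℤ):ℝ) + 1 := Int.lt_floor_add_one _
    have hqy : (q:ℝ)*y < (q:ℝ) := by nlinarith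
    have hmq : m < (q:ℤ) := by
      by_contra h; push_neg at h
      have h2 : ((q:ℕ):ℝ) ≤ ((m:ℤ):ℝ) := by exact_mod_cast h
      linarith
    refine ⟨m.toNat, by omega, ?_⟩
    have hcast : ((m.toNat : ℕ) : ℝ) = ((m:ℤ):ℝ) := by
      exact_mod_cast Int.toNat_of_nonneg hm0
    rw [gp_of_floor q y m rfl] at hfix
    by_cases hme : Even m
    · have hkev : Even m.toNat := by
        rw [← Int.toNat_of_nonneg hm0] at hme
        exact (Int.even_coe_nat _).mp hme
      rw [if_pos hme] at hfix
      rw [xf, if_pos hkev, hcast, div_eq_iff (by linarith)]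
      linear_combination -hfix
    · have hkod : ¬ Even m.toNat := by
        intro h
        apply hme
        rw [← Int.toNat_of_nonneg hm0]
        exact (Int.even_coe_nat _).mpr h
      rw [if_neg hme] at hfix
      rw [xf, if_neg hkod, hcast, div_eq_iff (by linarith)]
      linear_combination hfix
  · subst hyeq
    have hfl : ⌊(q:ℝ)*1⌋ = (q:ℤ) := by
      rw [mul_one]; exact_mod_cast Int.floor_natCast q
    rw [gp_of_floor q 1 (q:ℤ) hfl] at hfix
    have hqodd : ¬ Even (q:ℤ) := by
      intro h
      rw [if_pos h] at hfix
      push_cast at hfix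
      linarith
    have hqoddN : ¬ Even q := fun h => hqodd (by exact_mod_cast h)
    refine ⟨q - 1, by omega, ?_⟩
    have hev : Even (q - 1) := by
      rcases Nat.even_or_odd q with h | h
      · exact absurd h hqoddN
      · obtain ⟨c, hc⟩ := h; exact ⟨c, by omega⟩
    rw [xf, if_pos hev]
    have hcast : ((q - 1 : ℕ) : ℝ) = (q:ℝ) - 1 := by
      have h1 : (1:ℕ) ≤ q := by omega
      push_cast [Nat.cast_sub h1]
      ring
    rw [hcast]
    exact div_self (by linarith)

lemma xf_mono (q : ℕ) (hq : 2 ≤ q) : StrictMonoOn (xf q) (Set.Iio q) := by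
  have hQ2 : (2:ℝ) ≤ (q:ℝ) := by exact_mod_cast hq
  intro a ha b hb hab
  simp only [Set.mem_Iio] at ha hb
  have habR : (a:ℝ) + 1 ≤ (b:ℝ) := by exact_mod_cast hab
  have hbQ : (b:ℝ) + 1 ≤ (q:ℝ) := by exact_mod_cast hb
  have h1 : (0:ℝ) < (q:ℝ) - 1 := by linarith
  have h2 : (0:ℝ) < (q:ℝ) + 1 := by linarith
  rw [xf, xf]
  by_cases hae : Even a <;> by_cases hbe : Even b
  · rw [if_pos hae, if_pos hbe, div_lt_div_iff₀ h1 h1]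
    nlinarith
  · rw [if_pos hae, if_neg hbe, div_lt_div_iff₀ h1 h2]
    nlinarith [mul_le_mul_of_nonneg_right habR (by linarith : (0:ℝ) ≤ (q:ℝ) - 1)]
  · rw [if_neg hae, if_pos hbe, div_lt_div_iff₀ h2 h1]
    nlinarith [mul_le_mul_of_nonneg_right habR (by linarith : (0:ℝ) ≤ (q:ℝ) - 1)]
  · rw [if_neg hae, if_neg hbe, div_lt_div_iff₀ h2 h2]
    nlinarith
/-- `g_p^n` has exactly `p^n` fixed points in `[0,1]`, and listing them in increasing
order as `x_0 < x_1 < ⋯ < x_{p^n−1}` one has `x_k = k/(p^n − 1)` for `k` even and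
`x_k = (k+1)/(p^n + 1)` for `k` odd. -/
theorem fixedPoints_gp_iterate (p n : ℕ) (hp : 2 ≤ p) (hn : 1 ≤ n) :
    {y ∈ Set.Icc (0 : ℝ) 1 | (gp p)^[n] y = y}.ncard = p ^ n ∧
    ∃ x : ℕ → ℝ, StrictMonoOn x (Set.Iio (p ^ n)) ∧
      x '' Set.Iio (p ^ n) = {y ∈ Set.Icc (0 : ℝ) 1 | (gp p)^[n] y = y} ∧
      ∀ k < p ^ n, x k = if Even k then (k : ℝ) / ((p : ℝ) ^ n - 1)
        else ((k : ℝ) + 1) / ((p : ℝ) ^ n + 1) := by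
  set q := p ^ n with hqdef
  have hq2 : 2 ≤ q := le_trans hp (Nat.le_self_pow (by omega) p)
  have hSfix : {y ∈ Set.Icc (0 : ℝ) 1 | (gp p)^[n] y = y}
      = {y ∈ Set.Icc (0 : ℝ) 1 | gp q y = y} := by
    ext y
    simp only [Set.mem_setOf_eq]
    rw [gp_iterate p n hn]
  have himg : xf q '' Set.Iio q = {y ∈ Set.Icc (0 : ℝ) 1 | gp q y = y} := by
    ext y
    constructor
    · rintro ⟨k, hk, rfl⟩
      simp only [Set.mem_Iio] at hk
      obtain ⟨hmem, hfix⟩ := xf_fixed q hq2 k hk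
      exact ⟨hmem, hfix⟩
    · rintro ⟨hmem, hfix⟩
      obtain ⟨k, hk, hxk⟩ := xf_surj q hq2 y hmem hfix
      exact ⟨k, Set.mem_Iio.mpr hk, hxk⟩
  have hmono := xf_mono q hq2
  have hcastQ : ((q:ℕ):ℝ) = (p:ℝ)^n := by rw [hqdef]; push_cast; ring
  refine ⟨?_, xf q, hmono, by rw [himg, hSfix], ?_⟩
  · rw [hSfix, ← himg, Set.ncard_image_of_injOn hmono.injOn,
      ← Finset.coe_Iio, Set.ncard_coe_finset, Nat.card_Iio]
  · intro k hk
    rw [xf, hcastQ]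
end
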